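/- arXiv:2005.03942 — 2 statements merged into one kernel-verified Lean document; each statement's English description precedes it below -/
import Mathlib

section
/- Let G be a permutation group on a finite set Ω and N a normal subgroup of G. Then the height satisfies H(G) ≤ H(N) + ℓ(G/N), where ℓ(G/N) is the maximal length of a strictly decreasing subgroup chain in G/N. -/
/-- The pointwise stabilizer of a set `Λ` in a group `G` acting on `Ω`. -/
def ptStab (G : Type*) [Group G] {Ω : Type*} [MulAction G Ω] (Λ : Set Ω) : Subgroup G :=
  ⨅ ω ∈ Λ, MulAction.stabilizer G ω

/-- `Λ` is an independent set: its pointwise stabilizer differs from that of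
every proper subset. -/
def IsIndep (G : Type*) [Group G] {Ω : Type*} [MulAction G Ω] (Λ : Set Ω) : Prop :=
  ∀ Δ : Set Ω, Δ ⊂ Λ → ptStab G Δ ≠ ptStab G Λ

/-- The height of `G` on `Ω`: the maximum size of an independent set. -/
noncomputable def height (G : Type*) [Group G] (Ω : Type*) [MulAction G Ω] : ℕ :=
  sSup {k | ∃ Λ : Set Ω, IsIndep G Λ ∧ Λ.ncard = k}

/-- `ℓ(G)`: the maximum length of a strictly decreasing chain of subgroups of `G`. -/
noncomputable def chainLen (G : Type*) [Group G] : ℕ :=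
  sSup {k | ∃ c : Fin (k + 1) → Subgroup G, StrictAnti c ∧ c 0 = ⊤}

/-!
Let `Λ` be `G`-independent and let `Δ ⊆ Λ` be minimal with the same pointwise stabilizer in `N`;
then `Δ` is `N`-independent. Adding the points of `Λ \ Δ` to `Δ` one at a time strictly shrinks the
pointwise stabilizer in `G` (by independence of `Λ`) but not its intersection with `N`, so it strictly
shrinks the image in `G/N`. This gives a chain of length `|Λ \ Δ|` in `G/N`.
-/

theorem Subgroup.map_lt_map_of_lt_of_inf_ker_eq {G H : Type*} [Group G] [Group H] {f : G →* H}
    {K L : Subgroup G} (hKL : K < L) (hker : K ⊓ f.ker = L ⊓ f.ker) : K.map f < L.map f := by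
  refine lt_of_le_of_ne (Subgroup.map_mono hKL.le) fun hmap => hKL.ne (le_antisymm hKL.le ?_)
  intro l hl
  obtain ⟨k, hk, hfk⟩ : f l ∈ K.map f := hmap ▸ Subgroup.mem_map_of_mem f hl
  have hkl : k⁻¹ * l ∈ L ⊓ f.ker :=
    ⟨L.mul_mem (L.inv_mem (hKL.le hk)) hl, by simp [hfk]⟩
  exact mul_inv_cancel_left k l ▸ K.mul_mem hk (hker ▸ hkl).1

theorem exists_strictAnti_of_insert_lt {α β : Type*} [Preorder β] {f : Set α → β} {Δ Λ : Set α}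
    (hΛ : Λ.Finite) (hΔΛ : Δ ⊆ Λ) (hf : ∀ s, Δ ⊆ s → s ⊆ Λ → ∀ a ∈ Λ \ s, f (insert a s) < f s) :
    ∃ c : Fin ((Λ \ Δ).ncard + 1) → β, StrictAnti c ∧ c 0 = f Δ := by
  obtain ⟨n, hcard⟩ : ∃ n, (Λ \ Δ).ncard = n := ⟨_, rfl⟩
  rw [hcard]
  induction n generalizing Δ with
  | zero => exact ⟨fun _ => f Δ, Subsingleton.strictAnti (α := Fin 1) _, rfl⟩
  | succ n ih =>
    obtain ⟨a, haΛ, haΔ⟩ : (Λ \ Δ).Nonempty := Set.nonempty_of_ncard_ne_zero (by omega)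
    have hinsert : insert a Δ ⊆ Λ := Set.insert_subset haΛ hΔΛ
    have hcard' : (Λ \ insert a Δ).ncard = n := by
      have := Set.ncard_sdiff_add_ncard_of_subset hΔΛ hΛ
      have := Set.ncard_sdiff_add_ncard_of_subset hinsert hΛ
      have := Set.ncard_insert_of_notMem haΔ (hΛ.subset hΔΛ)
      omega
    obtain ⟨c, hc, hc0⟩ := ih hinsert (fun s hs => hf s ((Set.subset_insert a Δ).trans hs)) hcard'
    refine ⟨Matrix.vecCons (f Δ) c, hc.vecCons ?_, rfl⟩
    exact hc0 ▸ hf Δ subset_rfl hΔΛ a ⟨haΛ, haΔ⟩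

theorem le_chainLen {Q : Type*} [Group Q] [Finite Q] {m : ℕ} {c : Fin (m + 1) → Subgroup Q}
    (hc : StrictAnti c) : m ≤ chainLen Q := by
  have hbdd : BddAbove {k | ∃ c : Fin (k + 1) → Subgroup Q, StrictAnti c ∧ c 0 = ⊤} := by
    refine ⟨Nat.card (Subgroup Q), fun k ⟨c, hc, _⟩ => ?_⟩
    exact le_of_lt (by simpa using Nat.card_le_card_of_injective c hc.injective)
  refine le_csSup hbdd ⟨Function.update c 0 ⊤, fun i j hij => ?_, by simp⟩
  rw [Function.update_of_ne (Fin.pos_iff_ne_zero.mp (i.zero_le.trans_lt hij))]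
  rcases eq_or_ne i 0 with rfl | hi
  · simpa using (hc hij).trans_le le_top
  · simpa [Function.update_of_ne hi] using hc hij

section PointwiseStabilizer

variable {G Ω : Type*} [Group G] [MulAction G Ω]

theorem ptStab_antitone : Antitone (ptStab G : Set Ω → Subgroup G) :=
  fun _ _ h => biInf_mono h

theorem ptStab_insert (a : Ω) (s : Set Ω) :
    ptStab G (insert a s) = MulAction.stabilizer G a ⊓ ptStab G s :=
  iInf_insert

theorem ptStab_subgroupOf (N : Subgroup G) (s : Set Ω) :
    ptStab N s = (ptStab G s).subgroupOf N := by
  ext n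
  simp [ptStab, Subgroup.mem_iInf, Subgroup.mem_subgroupOf, MulAction.mem_stabilizer_iff,
    Subgroup.smul_def]

theorem exists_isIndep_subset_ptStab_eq [Finite Ω] (Λ : Set Ω) :
    ∃ Δ ⊆ Λ, IsIndep G Δ ∧ ptStab G Δ = ptStab G Λ := by
  obtain ⟨Δ, ⟨hΔΛ, hΔ⟩, hmin⟩ :=
    exists_minimal_of_wellFoundedLT (fun Δ => Δ ⊆ Λ ∧ ptStab G Δ = ptStab G Λ) ⟨Λ, subset_rfl, rfl⟩
  refine ⟨Δ, hΔΛ, fun Δ' hΔ' heq => hΔ'.not_subset ?_, hΔ⟩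
  exact hmin ⟨hΔ'.subset.trans hΔΛ, heq.trans hΔ⟩ hΔ'.subset

theorem IsIndep.ncard_le_height [Finite Ω] {Λ : Set Ω} (hΛ : IsIndep G Λ) :
    Λ.ncard ≤ height G Ω :=
  le_csSup ⟨Nat.card Ω, by rintro _ ⟨Λ, -, rfl⟩; exact Set.ncard_le_card Λ⟩ ⟨Λ, hΛ, rfl⟩

theorem IsIndep.ptStab_insert_lt {Λ s : Set Ω} (hΛ : IsIndep G Λ) (hsΛ : s ⊆ Λ) {a : Ω}
    (ha : a ∈ Λ \ s) : ptStab G (insert a s) < ptStab G s := by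
  have hlt : ptStab G Λ < ptStab G (Λ \ {a}) :=
    (ptStab_antitone Set.sdiff_subset).lt_of_ne' (hΛ _ (Set.sdiff_singleton_ssubset.mpr ha.1))
  obtain ⟨g, hg, hgΛ⟩ := SetLike.exists_of_lt hlt
  rw [← Set.insert_eq_of_mem ha.1, ← Set.insert_sdiff_singleton, ptStab_insert] at hgΛ
  have hga : g ∉ MulAction.stabilizer G a := fun h => hgΛ ⟨h, hg⟩
  have hgs : g ∈ ptStab G s :=
    ptStab_antitone (Set.subset_sdiff_singleton hsΛ ha.2) hg
  rw [ptStab_insert]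
  exact SetLike.lt_iff_le_and_exists.mpr ⟨inf_le_right, g, hgs, fun h => hga h.1⟩

theorem IsIndep.map_mk_ptStab_insert_lt (N : Subgroup G) [N.Normal] {Λ s : Set Ω}
    (hΛ : IsIndep G Λ) (hsΛ : s ⊆ Λ) {a : Ω} (ha : a ∈ Λ \ s)
    (hN : ptStab N (insert a s) = ptStab N s) :
    (ptStab G (insert a s)).map (QuotientGroup.mk' N) < (ptStab G s).map (QuotientGroup.mk' N) := by
  refine Subgroup.map_lt_map_of_lt_of_inf_ker_eq (hΛ.ptStab_insert_lt hsΛ ha) ?_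
  rwa [QuotientGroup.ker_mk', ← Subgroup.subgroupOf_inj, ← ptStab_subgroupOf,
    ← ptStab_subgroupOf]

end PointwiseStabilizer

theorem height_le_height_normal_add_chainLen_general {G Ω : Type*} [Group G] [Finite G] [Finite Ω]
    [MulAction G Ω] (N : Subgroup G) [N.Normal] :
    height G Ω ≤ height N Ω + chainLen (G ⧸ N) := by
  refine csSup_le' ?_
  rintro _ ⟨Λ, hΛ, rfl⟩
  obtain ⟨Δ, hΔΛ, hΔ, hΔN⟩ := exists_isIndep_subset_ptStab_eq (G := N) Λ
  obtain ⟨c, hc, -⟩ := exists_strictAnti_of_insert_lt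
    (f := fun s => (ptStab G s).map (QuotientGroup.mk' N)) (Set.toFinite Λ) hΔΛ
    fun s hΔs hsΛ a ha => hΛ.map_mk_ptStab_insert_lt N hsΛ ha <|
      le_antisymm (ptStab_antitone (Set.subset_insert a s)) <|
        (ptStab_antitone hΔs).trans (hΔN.trans_le (ptStab_antitone (Set.insert_subset ha.1 hsΛ)))
  calc Λ.ncard = Δ.ncard + (Λ \ Δ).ncard := by
        rw [add_comm, Set.ncard_sdiff_add_ncard_of_subset hΔΛ]
    _ ≤ height N Ω + chainLen (G ⧸ N) := add_le_add hΔ.ncard_le_height (le_chainLen hc)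

/-- If `N ⊴ G`, then `H(G) ≤ H(N) + ℓ(G/N)`. -/
theorem height_le_height_normal_add_chainLen {G Ω : Type*} [Group G] [Finite G] [Finite Ω]
    [MulAction G Ω] [FaithfulSMul G Ω] (N : Subgroup G) [N.Normal] :
    height G Ω ≤ height N Ω + chainLen (G ⧸ N) :=
  height_le_height_normal_add_chainLen_general N
end

section
/- Let G ≤ PΓL_n(q) act on pairs {U, W} of subspaces with dim U = m < n/2 and dim W = n − m, and let Λ be an independent set of such pairs. Define the bipartite graph Γ whose vertices are the m-spaces and (n−m)-spaces occurring in Λ, with an edge for each pair in Λ. Then Γ contains no path of length 3; equivalently, Γ has no path of length exceeding 2. -/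
/-- The multiplicative group structure on `AddAut V` that Mathlib used to provide
(multiplication is composition), which current Mathlib has replaced by an additive one. -/
instance AddAut.instGroupComp (A : Type*) [Add A] : Group (AddAut A) where
  mul g h := AddEquiv.trans h g
  one := AddEquiv.refl _
  inv := AddEquiv.symm
  mul_assoc _ _ _ := rfl
  one_mul _ := rfl
  mul_one _ := rfl
  inv_mul_cancel := AddEquiv.self_trans_symm

section GammaL

variable (K V : Type*) [Field K] [AddCommGroup V] [Module K V]

/-- `ΓL(V)`: the group of semilinear automorphisms of `V`, realized as the subgroup of
additive automorphisms which are semilinear with respect to some field automorphism. -/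
def GammaL : Subgroup (AddAut V) where
  carrier := {g | ∃ σ : K ≃+* K, ∀ (c : K) (v : V), g (c • v) = σ c • g v}
  one_mem' := ⟨RingEquiv.refl K, fun c v => rfl⟩
  mul_mem' := by
    rintro g h ⟨σ, hσ⟩ ⟨τ, hτ⟩
    exact ⟨τ.trans σ, fun c v => by
      show g (h (c • v)) = _
      rw [hτ, hσ]
      rfl⟩
  inv_mem' := by
    rintro g ⟨σ, hσ⟩
    refine ⟨σ.symm, fun c v => ?_⟩
    show g.symm (c • v) = σ.symm c • g.symm v
    apply g.injective
    rw [hσ]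
    simp

variable {K V}

/-- The image of a subspace under a semilinear automorphism is a subspace. -/
def gammaSMul (g : GammaL K V) (W : Submodule K V) : Submodule K V where
  carrier := (g : AddAut V) '' W
  add_mem' := by
    rintro _ _ ⟨x, hx, rfl⟩ ⟨y, hy, rfl⟩
    exact ⟨x + y, W.add_mem hx hy, map_add _ _ _⟩
  zero_mem' := ⟨0, W.zero_mem, map_zero _⟩
  smul_mem' := by
    rintro c _ ⟨x, hx, rfl⟩
    obtain ⟨σ, hσ⟩ := g.2
    exact ⟨σ.symm c • x, W.smul_mem _ hx, by rw [hσ, RingEquiv.apply_symm_apply]⟩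

theorem mem_gammaSMul {g : GammaL K V} {W : Submodule K V} {v : V} :
    v ∈ gammaSMul g W ↔ ∃ x ∈ W, (g : AddAut V) x = v := Iff.rfl

/-- The natural action of `ΓL(V)` on the subspaces of `V`. -/
instance : SMul (GammaL K V) (Submodule K V) := ⟨gammaSMul⟩

instance : MulAction (GammaL K V) (Submodule K V) where
  one_smul W := by
    ext v
    constructor
    · rintro ⟨x, hx, rfl⟩
      exact hx
    · intro hv
      exact ⟨v, hv, rfl⟩
  mul_smul g h W := by
    ext v
    constructor
    · rintro ⟨x, hx, rfl⟩
      exact ⟨(h : AddAut V) x, ⟨x, hx, rfl⟩, rfl⟩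
    · rintro ⟨_, ⟨x, hx, rfl⟩, rfl⟩
      exact ⟨x, hx, rfl⟩

end GammaL

/-! An element fixing the edges `(U, W)` and `(U', W')` fixes the vertices `U'` and `W`, hence
the pair `(U', W)`. So if `(U, W), (U', W), (U', W')` is a path in `Λ`, removing its middle edge
does not change the pointwise stabilizer, which independence forbids. -/

section PointwiseStabilizer

variable {G : Type*} [Group G]

theorem mem_ptStab {Ω : Type*} [MulAction G Ω] {Δ : Set Ω} {g : G} :
    g ∈ ptStab G Δ ↔ ∀ ω ∈ Δ, g • ω = ω := by
  simp only [ptStab, Subgroup.mem_iInf, MulAction.mem_stabilizer_iff]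

theorem ptStab_insert_of_le_stabilizer {Ω : Type*} [MulAction G Ω] {Δ : Set Ω} {ω : Ω}
    (h : ptStab G Δ ≤ MulAction.stabilizer G ω) : ptStab G (insert ω Δ) = ptStab G Δ := by
  ext g
  simp only [mem_ptStab, Set.forall_mem_insert, and_iff_right_iff_imp]
  exact fun hg => h (mem_ptStab.mpr hg)

theorem ptStab_le_stabilizer_fst_snd {α β : Type*} [MulAction G α] [MulAction G β]
    {Δ : Set (α × β)} {p r : α × β} (hp : p ∈ Δ) (hr : r ∈ Δ) :
    ptStab G Δ ≤ MulAction.stabilizer G (r.1, p.2) := fun g hg => by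
  rw [mem_ptStab] at hg
  rw [MulAction.mem_stabilizer_iff, Prod.smul_mk]
  exact Prod.ext (Prod.ext_iff.mp (hg r hr)).1 (Prod.ext_iff.mp (hg p hp)).2

theorem IsIndep.ptStab_diff_singleton_ne {Ω : Type*} [MulAction G Ω] {Λ : Set Ω}
    (hΛ : IsIndep G Λ) {ω : Ω} (hω : ω ∈ Λ) : ptStab G (Λ \ {ω}) ≠ ptStab G Λ :=
  hΛ _ (Set.sdiff_singleton_ssubset.mpr hω)

end PointwiseStabilizer

theorem no_path_of_length_three_general {K : Type*} [Field K] {n : ℕ}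
    (G : Subgroup (GammaL K (Fin n → K)))
    (Λ : Finset (Submodule K (Fin n → K) × Submodule K (Fin n → K)))
    (hindep : IsIndep G (Λ : Set (Submodule K (Fin n → K) × Submodule K (Fin n → K)))) :
    ∀ p q r, p ∈ Λ → q ∈ Λ → r ∈ Λ → p.2 = q.2 → q.1 = r.1 →
      p.1 = q.1 ∨ q.2 = r.2 := by
  intro p q r hp hq hr hpq hqr
  by_contra! hpath
  obtain rfl : q = (r.1, p.2) := Prod.ext hqr hpq.symm
  have hp' : p ∈ (Λ : Set _) \ {(r.1, p.2)} := ⟨hp, fun h => hpath.1 (congrArg Prod.fst h)⟩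
  have hr' : r ∈ (Λ : Set _) \ {(r.1, p.2)} := ⟨hr, fun h => hpath.2 (congrArg Prod.snd h).symm⟩
  apply hindep.ptStab_diff_singleton_ne hq
  rw [← ptStab_insert_of_le_stabilizer (ptStab_le_stabilizer_fst_snd hp' hr'),
    Set.insert_sdiff_self_of_mem hq]

/-- Let `G ≤ ΓL_n(q)` act on pairs `(U, W)` of subspaces of `V = F_q^n` with
`dim U = m < n/2` and `dim W = n − m` (either all pairs complementary, or `U < W` for
all pairs), and let `Λ` be an independent set of such pairs.  Then the associated
bipartite graph whose edges are the pairs in `Λ` contains no path of length 3: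
if `(U, W), (U', W), (U', W')` are edges of `Λ`, then `U = U'` or `W = W'`. -/
theorem no_path_of_length_three {K : Type*} [Field K] [Fintype K] {n m : ℕ}
    (hmn : 2 * m < n)
    (G : Subgroup (GammaL K (Fin n → K)))
    (Λ : Finset (Submodule K (Fin n → K) × Submodule K (Fin n → K)))
    (hdim : ∀ p ∈ Λ, Module.finrank K p.1 = m ∧ Module.finrank K p.2 = n - m)
    (hstruct : (∀ p ∈ Λ, IsCompl p.1 p.2) ∨ (∀ p ∈ Λ, p.1 < p.2))
    (hindep : IsIndep G (Λ : Set (Submodule K (Fin n → K) × Submodule K (Fin n → K)))) :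
    ∀ p q r, p ∈ Λ → q ∈ Λ → r ∈ Λ → p.2 = q.2 → q.1 = r.1 →
      p.1 = q.1 ∨ q.2 = r.2 :=
  no_path_of_length_three_general G Λ hindep
end
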